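/- Let M be a Garside monoid with Garside element Δ, and let N be a parabolic submonoid of M. Then the relation ≤_N is a partial order on the enveloping group G(M); moreover, if g1 ≤_N g2 then g1 G(N) = g2 G(N), where G(N) is the subgroup of G(M) generated by N. -/

import Mathlib

/-!
Normal forms exist and are unique, because `G(M)` is the group of right fractions of `M`
(the Ore condition holds since every element divides a power of `Δ`). So `≤_N` is the relation
`PairLeN` between normal forms, and everything happens in `M`. Reflexivity is witnessed by
`h₁ = h₂ = a = 1`. For antisymmetry, `a₂ = a₁ a` and `a₁ = a₂ a'` force `a = 1`; the gcd condition
then makes `h₂` left-divide `h₁`, whence `b₁` right-divides `b₂`, and symmetrically. For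
transitivity, the right lcm `x h₁' = y h₂` of the middle witnesses lies in `N` since `N` is
parabolic, `y h₁` and `x h₂'` are the new witnesses, and the gcd condition survives because
left gcds commute with left multiplication. Finally `g₂⁻¹ g₁ = h₂⁻¹ h₁ ∈ G(N)`.
-/

namespace PG

variable {M : Type*} [Monoid M]

/-- `LDvd a b` : `a` left-divides `b`. -/
def LDvd (a b : M) : Prop := ∃ c, b = a * c

/-- `RDvd a b` : `a` right-divides `b`. -/
def RDvd (a b : M) : Prop := ∃ c, b = c * a

/-- A monoid is cancellative if `c * a * d = c * b * d` implies `a = b`. -/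
def IsCancellative (M : Type*) [Monoid M] : Prop :=
  ∀ a b c d : M, c * a * d = c * b * d → a = b

/-- A monoid is atomic if it admits a norm `ν : M → ℕ` with `ν a > 0` for `a ≠ 1`
and `ν (a * b) ≥ ν a + ν b`. -/
def IsAtomicMon (M : Type*) [Monoid M] : Prop :=
  ∃ ν : M → ℕ, (∀ a : M, a ≠ 1 → 0 < ν a) ∧ ∀ a b : M, ν a + ν b ≤ ν (a * b)

/-- `m` is the least common multiple of `a` and `b` for left-divisibility. -/
def IsLcmL (a b m : M) : Prop :=
  LDvd a m ∧ LDvd b m ∧ ∀ c : M, LDvd a c → LDvd b c → LDvd m c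

/-- `m` is the least common multiple of `a` and `b` for right-divisibility. -/
def IsLcmR (a b m : M) : Prop :=
  RDvd a m ∧ RDvd b m ∧ ∀ c : M, RDvd a c → RDvd b c → RDvd m c

/-- `d` is the greatest common left-divisor of `a` and `b`. -/
def IsGcdL (a b d : M) : Prop :=
  LDvd d a ∧ LDvd d b ∧ ∀ c : M, LDvd c a → LDvd c b → LDvd c d

/-- `d` is the greatest common right-divisor of `a` and `b`. -/
def IsGcdR (a b d : M) : Prop :=
  RDvd d a ∧ RDvd d b ∧ ∀ c : M, RDvd c a → RDvd c b → RDvd c d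

/-- A preGarside monoid: cancellative, atomic, and any two elements admitting a
common multiple (on the appropriate side) admit a least one. -/
def IsPreGarside (M : Type*) [Monoid M] : Prop :=
  IsCancellative M ∧ IsAtomicMon M ∧
    (∀ a b : M, (∃ c, LDvd a c ∧ LDvd b c) → ∃ m, IsLcmL a b m) ∧
    (∀ a b : M, (∃ c, RDvd a c ∧ RDvd b c) → ∃ m, IsLcmR a b m)

/-- A submonoid is special if it is closed under factors. -/
def IsSpecial (N : Submonoid M) : Prop := ∀ a b : M, a * b ∈ N → a ∈ N ∧ b ∈ N

/-- A (standard) parabolic submonoid: special and closed under all existing lcms. -/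
def IsParabolic (N : Submonoid M) : Prop :=
  IsSpecial N ∧ (∀ a b m : M, a ∈ N → b ∈ N → IsLcmL a b m → m ∈ N) ∧
    ∀ a b m : M, a ∈ N → b ∈ N → IsLcmR a b m → m ∈ N

/-- `b` is a factor of `a`. -/
def Factor (b a : M) : Prop := ∃ c d : M, a = c * b * d

/-- The set of factors of `a`. -/
def Factors (a : M) : Set M := {b | Factor b a}

/-- An element is balanced when its left-divisors and right-divisors coincide. -/
def IsBalanced (a : M) : Prop := {b : M | LDvd b a} = {b : M | RDvd b a}

/-- A Garside element: balanced, and its factors generate the monoid. -/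
def IsGarsideElt (Δ : M) : Prop := IsBalanced Δ ∧ Submonoid.closure (Factors Δ) = ⊤

/-- A Garside monoid: a preGarside monoid possessing a Garside element. -/
def IsGarside (M : Type*) [Monoid M] : Prop := IsPreGarside M ∧ ∃ Δ : M, IsGarsideElt Δ

/-- The factors of `a` computed inside the submonoid `N`. -/
def FactorsIn (N : Submonoid M) (a : M) : Set M :=
  {b | b ∈ N ∧ ∃ c ∈ N, ∃ d ∈ N, a = c * b * d}

/-- `Δ` is a Garside element of the submonoid `N`: it is balanced in `N` and its
factors in `N` generate `N`. -/
def IsGarsideEltIn (N : Submonoid M) (Δ : M) : Prop :=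
  Δ ∈ N ∧ ({b : M | b ∈ N ∧ ∃ c ∈ N, Δ = b * c} = {b : M | b ∈ N ∧ ∃ c ∈ N, Δ = c * b}) ∧
    Submonoid.closure (FactorsIn N Δ) = N

/-- The right coset `g * N` (an `R_N`-class). -/
def RCoset (N : Submonoid M) (g : M) : Set M := {x | ∃ h ∈ N, x = g * h}

/-- The left coset `N * g` (an `L_N`-class). -/
def LCoset (N : Submonoid M) (g : M) : Set M := {x | ∃ h ∈ N, x = h * g}

/-- `RReduces N B A` : the `R_N`-class `B` reduces in one step to the `R_N`-class `A`,
i.e. `A = g₁ N`, `B = g₂ N` with `g₂ ∈ g₁ N` and `g₁ ∉ g₂ N`. -/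
def RReduces (N : Submonoid M) (B A : Set M) : Prop :=
  ∃ g₁ g₂ : M, A = RCoset N g₁ ∧ B = RCoset N g₂ ∧ g₂ ∈ RCoset N g₁ ∧ g₁ ∉ RCoset N g₂

/-- `LReduces N B A` : the `L_N`-class `B` reduces in one step to the `L_N`-class `A`. -/
def LReduces (N : Submonoid M) (B A : Set M) : Prop :=
  ∃ g₁ g₂ : M, A = LCoset N g₁ ∧ B = LCoset N g₂ ∧ g₂ ∈ LCoset N g₁ ∧ g₁ ∉ LCoset N g₂

/-- `N` has the `R` confluence property: the reduction rule on `R_N`-classes is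
Noetherian and locally confluent. -/
def RConfluence (N : Submonoid M) : Prop :=
  (¬ ∃ f : ℕ → Set M, ∀ n : ℕ, RReduces N (f n) (f (n + 1))) ∧
    ∀ C A B : Set M, RReduces N C A → RReduces N C B →
      ∃ D : Set M, Relation.ReflTransGen (RReduces N) A D ∧
        Relation.ReflTransGen (RReduces N) B D

/-- `N` has the `L` confluence property. -/
def LConfluence (N : Submonoid M) : Prop :=
  (¬ ∃ f : ℕ → Set M, ∀ n : ℕ, LReduces N (f n) (f (n + 1))) ∧
    ∀ C A B : Set M, LReduces N C A → LReduces N C B →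
      ∃ D : Set M, Relation.ReflTransGen (LReduces N) A D ∧
        Relation.ReflTransGen (LReduces N) B D

/-- `N` has the confluence property. -/
def Confluence (N : Submonoid M) : Prop := RConfluence N ∧ LConfluence N

/-- The `R_N`-class `C` is minimal: whenever `g` represents `C` and `g = g' * h` with
`h ∈ N`, one has `g' N = C`. -/
def IsMinimalRCoset (N : Submonoid M) (C : Set M) : Prop :=
  (∃ g : M, C = RCoset N g) ∧
    ∀ g g' h : M, h ∈ N → C = RCoset N g → g = g' * h → RCoset N g' = C

/-- The `L_N`-class `C` is minimal. -/
def IsMinimalLCoset (N : Submonoid M) (C : Set M) : Prop :=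
  (∃ g : M, C = LCoset N g) ∧
    ∀ g g' h : M, h ∈ N → C = LCoset N g → g = h * g' → LCoset N g' = C

/-- The set of atoms of `M`. -/
def AtomSet (M : Type*) [Monoid M] : Set M :=
  {a | a ≠ 1 ∧ ∀ b c : M, a = b * c → b = 1 ∨ c = 1}

/-- `|x|` : the least number of factors of `Δ` needed to write `x` as a product. -/
noncomputable def lenFactors (Δ x : M) : ℕ :=
  sInf {k | ∃ l : List M, l.length = k ∧ (∀ y ∈ l, y ∈ Factors Δ) ∧ l.prod = x}

section Amalgam

variable {M₁ M₂ N : Type*} [Monoid M₁] [Monoid M₂] [Monoid N]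

/-- The congruence on the free product `M₁ ∗ M₂` identifying `ι₁ h` with `ι₂ h`
for every `h ∈ N`. -/
def amalgamCon (ι₁ : N →* M₁) (ι₂ : N →* M₂) : Con (Monoid.Coprod M₁ M₂) :=
  conGen fun a b => ∃ h : N, a = Monoid.Coprod.inl (ι₁ h) ∧ b = Monoid.Coprod.inr (ι₂ h)

/-- The amalgamated product `M₁ *_N M₂` : the pushout of `ι₁ : N →* M₁` and
`ι₂ : N →* M₂` in the category of monoids. -/
def Amalgam (ι₁ : N →* M₁) (ι₂ : N →* M₂) : Type _ := (amalgamCon ι₁ ι₂).Quotient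

instance (ι₁ : N →* M₁) (ι₂ : N →* M₂) : Monoid (Amalgam ι₁ ι₂) :=
  inferInstanceAs (Monoid (amalgamCon ι₁ ι₂).Quotient)

/-- The canonical morphism `M₁ →* M₁ *_N M₂`. -/
def amalgamInl (ι₁ : N →* M₁) (ι₂ : N →* M₂) : M₁ →* Amalgam ι₁ ι₂ :=
  (amalgamCon ι₁ ι₂).mk'.comp Monoid.Coprod.inl

/-- The canonical morphism `M₂ →* M₁ *_N M₂`. -/
def amalgamInr (ι₁ : N →* M₁) (ι₂ : N →* M₂) : M₂ →* Amalgam ι₁ ι₂ :=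
  (amalgamCon ι₁ ι₂).mk'.comp Monoid.Coprod.inr

end Amalgam

section Groups

/-- `G`, together with `κ : M →* G`, is the enveloping group `G(M)` of the monoid `M`:
every monoid morphism from `M` to a group factors uniquely through `κ`. -/
def IsEnvelopingGroup (M : Type) [Monoid M] (G : Type) [Group G] (κ : M →* G) : Prop :=
  ∀ (H : Type) [Group H], ∀ f : M →* H, ∃! φ : G →* H, φ.comp κ = f

variable {G : Type*} [Group G]

/-- `(a, b)` is the (right) normal form of `g ∈ G(M)` : `g = a b⁻¹` with `a ∧_R b = 1`. -/
def NormalForm (κ : M →* G) (g : G) (a b : M) : Prop :=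
  g = κ a * (κ b)⁻¹ ∧ ∀ c : M, RDvd c a → RDvd c b → c = 1

/-- The relation `≤_N` on `G(M)` : for `g₁ = a₁ b₁⁻¹` and `g₂ = a₂ b₂⁻¹` in normal form,
`g₁ ≤_N g₂` iff there are `h₁, h₂ ∈ N` and `a ∈ M` with `a₂ = a₁ a`,
`h₂ b₂ = h₁ b₁ a` and `h₂ ∧_L h₁ = h₂ ∧_L (h₁ b₁)`. -/
def leN (κ : M →* G) (N : Submonoid M) (g₁ g₂ : G) : Prop :=
  ∃ a₁ b₁ a₂ b₂ : M, NormalForm κ g₁ a₁ b₁ ∧ NormalForm κ g₂ a₂ b₂ ∧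
    ∃ h₁ ∈ N, ∃ h₂ ∈ N, ∃ a : M, a₂ = a₁ * a ∧ h₂ * b₂ = h₁ * b₁ * a ∧
      ∃ d : M, IsGcdL h₂ h₁ d ∧ IsGcdL h₂ (h₁ * b₁) d

/-- `|g|` for `g ∈ G(M)` : the least number of factors of `Δ` and inverses of such
needed to write `g` as a product. -/
noncomputable def lenSimple (κ : M →* G) (Δ : M) (g : G) : ℕ :=
  sInf {k | ∃ l : List G, l.length = k ∧
    (∀ x ∈ l, ∃ d ∈ Factors Δ, x = κ d ∨ x = (κ d)⁻¹) ∧ l.prod = g}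

/-- `PhiSpec κ Δ ΔN g h m` : `m = φ_g(h)`, where, for `g` with normal form `a b⁻¹`,
`φ_g(h) = a (a ∧_R (h b))⁻¹ (M_N(h b (a ∧_R (h b))⁻¹))⁻¹` and
`M_N(x) = (x ∧_L Δ_N^{|x|})⁻¹ x`. -/
def PhiSpec (κ : M →* G) (Δ ΔN : M) (g : G) (h : M) (m : G) : Prop :=
  ∃ a b c y d z : M,
    NormalForm κ g a b ∧ IsGcdR a (h * b) c ∧ h * b = y * c ∧
    IsGcdL y (ΔN ^ lenFactors Δ y) d ∧ y = d * z ∧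
    m = κ a * (κ c)⁻¹ * (κ z)⁻¹

/-- The restriction of `κ : M →* G` to a submonoid `N`, seen as a morphism onto the
subgroup of `G` generated by the image of `N`. -/
def restrictHom (κ : M →* G) (N : Submonoid M) :
    ↥N →* ↥(Subgroup.closure (κ '' (N : Set M))) :=
  MonoidHom.codRestrict (κ.comp N.subtype) (Subgroup.closure (κ '' (N : Set M)))
    fun x => Subgroup.subset_closure ⟨(x : M), x.2, rfl⟩

end Groups

/-- The family of preGarside monoids of FC type: the smallest family of monoids
containing the Garside monoids and closed under amalgamated products over a common
parabolic submonoid (and under isomorphism). -/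
inductive IsFCType : (M : Type) → [_inst : Monoid M] → Prop where
  | garside : ∀ (M : Type) [Monoid M], IsGarside M → IsFCType M
  | amalgam : ∀ (M₁ M₂ N : Type) [Monoid M₁] [Monoid M₂] [Monoid N]
      (ι₁ : N →* M₁) (ι₂ : N →* M₂),
      Function.Injective ι₁ → Function.Injective ι₂ →
      IsParabolic (MonoidHom.mrange ι₁) → IsParabolic (MonoidHom.mrange ι₂) →
      IsFCType M₁ → IsFCType M₂ → IsFCType (Amalgam ι₁ ι₂)
  | congr : ∀ (M : Type) [Monoid M] (M' : Type) [Monoid M'],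
      (M ≃* M') → IsFCType M → IsFCType M'


section Divisibility

variable {M : Type*} [Monoid M] {a b c x : M}

theorem IsCancellative.mul_left_cancel (hc : IsCancellative M) (h : x * a = x * b) : a = b :=
  hc a b x 1 (by simpa using h)

theorem IsCancellative.mul_right_cancel (hc : IsCancellative M) (h : a * x = b * x) : a = b :=
  hc a b 1 x (by simpa using h)

theorem IsAtomicMon.eq_one_of_mul_eq_one (hA : IsAtomicMon M) (h : a * b = 1) :
    a = 1 ∧ b = 1 := by
  obtain ⟨ν, hν_pos, hν_mul⟩ := hA
  have hν₁ := hν_mul 1 1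
  have hν := hν_mul a b
  rw [one_mul] at hν₁
  rw [h] at hν
  constructor <;> by_contra hne
  · linarith [hν_pos a hne]
  · linarith [hν_pos b hne]

theorem ldvd_refl (a : M) : LDvd a a := ⟨1, (mul_one a).symm⟩

theorem one_ldvd (a : M) : LDvd 1 a := ⟨a, (one_mul a).symm⟩

theorem ldvd_mul_right (a b : M) : LDvd a (a * b) := ⟨b, rfl⟩

theorem LDvd.trans : LDvd a b → LDvd b c → LDvd a c
  | ⟨u, hu⟩, ⟨v, hv⟩ => ⟨u * v, by rw [hv, hu, mul_assoc]⟩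

theorem LDvd.mul_left : LDvd a b → ∀ x : M, LDvd (x * a) (x * b)
  | ⟨u, hu⟩, x => ⟨u, by rw [hu, mul_assoc]⟩

theorem RDvd.mul_right : RDvd a b → ∀ x : M, RDvd (a * x) (b * x)
  | ⟨u, hu⟩, x => ⟨u, by rw [hu, mul_assoc]⟩

theorem ldvd_of_mul_ldvd_mul_left (hc : IsCancellative M) : LDvd (x * a) (x * b) → LDvd a b
  | ⟨u, hu⟩ => ⟨u, hc.mul_left_cancel (by rw [hu, mul_assoc])⟩

theorem LDvd.antisymm (hc : IsCancellative M) (hA : IsAtomicMon M) :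
    LDvd a b → LDvd b a → a = b
  | ⟨u, hu⟩, ⟨v, hv⟩ => by
    have huv : u * v = 1 := (hc.mul_left_cancel (by rw [mul_one, ← mul_assoc, ← hu, ← hv])).symm
    rw [hu, (hA.eq_one_of_mul_eq_one huv).1, mul_one]

end Divisibility

section Gcd

variable {M : Type*} [Monoid M] {d u v w : M}

theorem exists_isGcdL (hA : IsAtomicMon M)
    (hlcm : ∀ a b : M, (∃ c, LDvd a c ∧ LDvd b c) → ∃ m, IsLcmL a b m) (a b : M) :
    ∃ d, IsGcdL a b d := by
  obtain ⟨ν, hν_pos, hν_mul⟩ := hA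
  have hν_ldvd : ∀ {c x : M}, LDvd c x → ν c ≤ ν x := by
    rintro c _ ⟨y, rfl⟩
    exact le_self_add.trans (hν_mul c y)
  let S : Set ℕ := {n | ∃ c, LDvd c a ∧ LDvd c b ∧ ν c = n}
  have hS : BddAbove S := ⟨ν a, by rintro _ ⟨c, hca, -, rfl⟩; exact hν_ldvd hca⟩
  obtain ⟨d, hda, hdb, hνd⟩ := Nat.sSup_mem (s := S) ⟨_, 1, one_ldvd a, one_ldvd b, rfl⟩ hS
  refine ⟨d, hda, hdb, fun c hca hcb => ?_⟩
  -- the lcm `d * x` of `d` and `c` is again a common divisor, so maximality of `ν d` forces `x = 1`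
  obtain ⟨_, ⟨x, rfl⟩, hcm, hm⟩ := hlcm d c ⟨a, hda, hca⟩
  have hle : ν (d * x) ≤ ν d := hνd ▸ le_csSup hS ⟨_, hm a hda hca, hm b hdb hcb, rfl⟩
  have hx : x = 1 := by
    by_contra hx
    linarith [hν_pos x hx, hν_mul d x]
  rwa [hx, mul_one] at hcm

theorem IsGcdL.mul_left (hc : IsCancellative M)
    (hlcm : ∀ a b : M, (∃ c, LDvd a c ∧ LDvd b c) → ∃ m, IsLcmL a b m)
    (h : IsGcdL u v w) (x : M) : IsGcdL (x * u) (x * v) (x * w) := by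
  obtain ⟨hwu, hwv, hw⟩ := h
  refine ⟨hwu.mul_left x, hwv.mul_left x, fun e heu hev => ?_⟩
  obtain ⟨_, hem, ⟨t, rfl⟩, hm⟩ := hlcm e x ⟨x * u, heu, ldvd_mul_right x u⟩
  have htu := ldvd_of_mul_ldvd_mul_left hc (hm _ heu (ldvd_mul_right x u))
  have htv := ldvd_of_mul_ldvd_mul_left hc (hm _ hev (ldvd_mul_right x v))
  exact hem.trans ((hw t htu htv).mul_left x)

theorem IsGcdL.of_mul_right (h : IsGcdL u (v * w) d) (hdv : LDvd d v) : IsGcdL u v d :=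
  ⟨h.1, hdv, fun c hcu hcv => h.2.2 c hcu (hcv.trans (ldvd_mul_right v w))⟩

end Gcd

section Opposite

open MulOpposite

variable {M : Type*} [Monoid M] {a b d m : M}

theorem ldvd_op_iff : LDvd (op a) (op b) ↔ RDvd a b :=
  ⟨fun ⟨c, hc⟩ => ⟨unop c, op_injective (by rw [hc, op_mul, op_unop])⟩,
    fun ⟨c, hc⟩ => ⟨op c, by rw [hc, op_mul]⟩⟩

theorem rdvd_op_iff : RDvd (op a) (op b) ↔ LDvd a b :=
  ⟨fun ⟨c, hc⟩ => ⟨unop c, op_injective (by rw [hc, op_mul, op_unop])⟩,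
    fun ⟨c, hc⟩ => ⟨op c, by rw [hc, op_mul]⟩⟩

theorem factor_op_iff : Factor (op b) (op a) ↔ Factor b a :=
  ⟨fun ⟨c, d, h⟩ => ⟨unop d, unop c, op_injective (by rw [h]; simp [mul_assoc])⟩,
    fun ⟨c, d, h⟩ => ⟨op d, op c, by rw [h]; simp [mul_assoc]⟩⟩

theorem isGcdL_op_iff : IsGcdL (op a) (op b) (op d) ↔ IsGcdR a b d := by
  simp only [IsGcdL, IsGcdR, op_surjective.forall, ldvd_op_iff]

theorem isLcmL_op_iff : IsLcmL (op a) (op b) (op m) ↔ IsLcmR a b m := by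
  simp only [IsLcmL, IsLcmR, op_surjective.forall, ldvd_op_iff]

theorem IsCancellative.op (hc : IsCancellative M) : IsCancellative Mᵐᵒᵖ :=
  fun _ _ c d h =>
    unop_injective (hc _ _ (unop d) (unop c) (by simpa [mul_assoc] using congrArg unop h))

theorem IsAtomicMon.op (hA : IsAtomicMon M) : IsAtomicMon Mᵐᵒᵖ := by
  obtain ⟨ν, hν_pos, hν_mul⟩ := hA
  exact ⟨ν ∘ unop, fun a ha => hν_pos _ (by simpa using ha), fun a b => by
    simpa [add_comm] using hν_mul (unop b) (unop a)⟩

theorem exists_isGcdR (hA : IsAtomicMon M)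
    (hlcm : ∀ a b : M, (∃ c, RDvd a c ∧ RDvd b c) → ∃ m, IsLcmR a b m) (a b : M) :
    ∃ d, IsGcdR a b d := by
  have hlcm_op : ∀ a b : Mᵐᵒᵖ, (∃ c, LDvd a c ∧ LDvd b c) → ∃ m, IsLcmL a b m := by
    simp only [op_surjective.forall, op_surjective.exists, ldvd_op_iff, isLcmL_op_iff]
    exact hlcm
  obtain ⟨d, hd⟩ := exists_isGcdL hA.op hlcm_op (op a) (op b)
  exact ⟨unop d, isGcdL_op_iff.1 hd⟩

theorem RDvd.antisymm (hc : IsCancellative M) (hA : IsAtomicMon M) (hab : RDvd a b)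
    (hba : RDvd b a) : a = b :=
  op_injective (LDvd.antisymm hc.op hA.op (ldvd_op_iff.2 hab) (ldvd_op_iff.2 hba))

end Opposite

section Garside

open MulOpposite

variable {M : Type*} [Monoid M] {Δ f : M}

theorem IsBalanced.ldvd_and_rdvd_of_factor (hb : IsBalanced Δ) (hf : Factor f Δ) :
    LDvd f Δ ∧ RDvd f Δ := by
  have hiff : ∀ x : M, LDvd x Δ ↔ RDvd x Δ := fun x => Set.ext_iff.mp hb x
  obtain ⟨c, d, h⟩ := hf
  constructor
  · obtain ⟨e, he⟩ := (hiff (f * d)).2 ⟨c, by rw [h, mul_assoc]⟩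
    exact ⟨d * e, by rw [he, mul_assoc]⟩
  · obtain ⟨e, he⟩ := (hiff (c * f)).1 ⟨d, h⟩
    exact ⟨e * c, by rw [he, mul_assoc]⟩

theorem IsGarsideElt.exists_mul_eq_mul (hΔ : IsGarsideElt Δ) (a : M) :
    ∃ a', a * Δ = Δ * a' := by
  have ha : a ∈ Submonoid.closure (Factors Δ) := hΔ.2 ▸ Submonoid.mem_top a
  induction ha using Submonoid.closure_induction with
  | mem f hf =>
    -- `f * c = Δ` and, `Δ` being balanced, also `c * c' = Δ`
    obtain ⟨⟨c, hfc⟩, -⟩ := hΔ.1.ldvd_and_rdvd_of_factor hf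
    obtain ⟨c', hcc'⟩ := (Set.ext_iff.mp hΔ.1 c).2 ⟨f, hfc⟩
    exact ⟨c', by nth_rewrite 1 [hcc']; rw [← mul_assoc, ← hfc]⟩
  | one => exact ⟨1, by rw [one_mul, mul_one]⟩
  | mul x y _ _ ihx ihy =>
    obtain ⟨x', hx'⟩ := ihx
    obtain ⟨y', hy'⟩ := ihy
    exact ⟨x' * y', by rw [mul_assoc, hy', ← mul_assoc, hx', mul_assoc]⟩

theorem IsGarsideElt.exists_mul_pow_eq_mul (hΔ : IsGarsideElt Δ) (a : M) (k : ℕ) :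
    ∃ a', a * Δ ^ k = Δ ^ k * a' := by
  induction k generalizing a with
  | zero => exact ⟨a, by simp⟩
  | succ k ih =>
    obtain ⟨b, hb⟩ := ih a
    obtain ⟨c, hc⟩ := hΔ.exists_mul_eq_mul b
    exact ⟨c, by rw [pow_succ, ← mul_assoc, hb, mul_assoc, hc, mul_assoc]⟩

theorem IsGarsideElt.exists_ldvd_pow (hΔ : IsGarsideElt Δ) (a : M) : ∃ k, LDvd a (Δ ^ k) := by
  have ha : a ∈ Submonoid.closure (Factors Δ) := hΔ.2 ▸ Submonoid.mem_top a
  induction ha using Submonoid.closure_induction with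
  | mem f hf => exact ⟨1, by simpa using (hΔ.1.ldvd_and_rdvd_of_factor hf).1⟩
  | one => exact ⟨0, one_ldvd _⟩
  | mul x y _ _ ihx ihy =>
    obtain ⟨j, c, hc⟩ := ihx
    obtain ⟨k, d, hd⟩ := ihy
    obtain ⟨c', hc'⟩ := hΔ.exists_mul_pow_eq_mul c k
    exact ⟨j + k, d * c', by rw [pow_add, hc, mul_assoc, hc', hd, mul_assoc, mul_assoc]⟩

theorem IsGarsideElt.exists_common_right_mul (hΔ : IsGarsideElt Δ) (a b : M) :
    ∃ c, LDvd a c ∧ LDvd b c := by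
  obtain ⟨j, hj⟩ := hΔ.exists_ldvd_pow a
  obtain ⟨k, hk⟩ := hΔ.exists_ldvd_pow b
  exact ⟨Δ ^ (j + k), hj.trans ⟨Δ ^ k, pow_add Δ j k⟩,
    hk.trans ⟨Δ ^ j, by rw [add_comm, pow_add]⟩⟩

theorem IsGarsideElt.op (hΔ : IsGarsideElt Δ) : IsGarsideElt (MulOpposite.op Δ) := by
  refine ⟨Set.ext fun b => ?_, ?_⟩
  · induction b using MulOpposite.rec'
    simpa only [Set.mem_ofPred_eq, ldvd_op_iff, rdvd_op_iff] using (Set.ext_iff.mp hΔ.1 _).symm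
  · have hFactors : Factors (MulOpposite.op Δ) = unop ⁻¹' Factors Δ :=
      Set.ext fun b => by
        induction b using MulOpposite.rec'
        exact factor_op_iff
    rw [hFactors, ← Submonoid.op_closure, hΔ.2, Submonoid.op_top]

theorem IsGarsideElt.exists_common_left_mul (hΔ : IsGarsideElt Δ) (a b : M) :
    ∃ c, RDvd a c ∧ RDvd b c := by
  obtain ⟨c, hac, hbc⟩ := hΔ.op.exists_common_right_mul (MulOpposite.op a) (MulOpposite.op b)
  induction c using MulOpposite.rec'
  exact ⟨_, ldvd_op_iff.1 hac, ldvd_op_iff.1 hbc⟩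

end Garside

section EnvelopingGroup

open MulOpposite OreLocalization

variable {M : Type} [Monoid M] {G : Type} [Group G] {κ : M →* G}

theorem IsEnvelopingGroup.closure_range_eq_top (hκ : IsEnvelopingGroup M G κ) :
    Subgroup.closure (Set.range κ) = ⊤ := by
  set H := Subgroup.closure (Set.range κ)
  obtain ⟨φ, hφ, -⟩ := hκ H (κ.codRestrict H fun m => Subgroup.subset_closure ⟨m, rfl⟩)
  obtain ⟨χ, -, hχ⟩ := hκ G κ
  have hid : H.subtype.comp φ = MonoidHom.id G := by
    refine (hχ _ ?_).trans (hχ _ (MonoidHom.id_comp κ)).symm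
    show (H.subtype.comp φ).comp κ = κ
    rw [MonoidHom.comp_assoc, hφ]
    rfl
  refine eq_top_iff.2 fun g _ => ?_
  have hg : (φ g : G) = g := DFunLike.congr_fun hid g
  exact hg ▸ (φ g).2

theorem IsEnvelopingGroup.exists_eq_mul_inv (hκ : IsEnvelopingGroup M G κ)
    (hcm : ∀ a b : M, ∃ c, LDvd a c ∧ LDvd b c) (g : G) : ∃ a b : M, g = κ a * (κ b)⁻¹ := by
  have hg : g ∈ Subgroup.closure (Set.range κ) := hκ.closure_range_eq_top ▸ Subgroup.mem_top g
  induction hg using Subgroup.closure_induction with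
  | mem _ hm =>
    obtain ⟨m, rfl⟩ := hm
    exact ⟨m, 1, by simp⟩
  | one => exact ⟨1, 1, by simp⟩
  | mul _ _ _ _ ih₁ ih₂ =>
    obtain ⟨a, b, rfl⟩ := ih₁
    obtain ⟨c, d, rfl⟩ := ih₂
    -- a common right multiple `b * p = c * q` turns `b⁻¹ * c` into `p * q⁻¹`
    obtain ⟨_, ⟨p, rfl⟩, ⟨q, hq⟩⟩ := hcm b c
    have hc : κ c = κ b * κ p * (κ q)⁻¹ :=
      eq_mul_inv_of_mul_eq (by rw [← map_mul, ← map_mul, hq])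
    exact ⟨a * p, d * q, by rw [hc]; simp only [map_mul]; group⟩
  | inv _ _ ih =>
    obtain ⟨a, b, rfl⟩ := ih
    exact ⟨b, a, by simp⟩

/-- Right fractions of `M` are left fractions of `Mᵐᵒᵖ`, so common right multiples in `M`
make all of `Mᵐᵒᵖ` a (left) Ore set. -/
@[reducible]
noncomputable def oreSetTopOp (hc : IsCancellative M)
    (hcm : ∀ a b : M, ∃ c, LDvd a c ∧ LDvd b c) : OreSet (⊤ : Submonoid Mᵐᵒᵖ) := by
  have hore : ∀ (r : Mᵐᵒᵖ) (s : (⊤ : Submonoid Mᵐᵒᵖ)),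
      ∃ (r' : Mᵐᵒᵖ) (s' : (⊤ : Submonoid Mᵐᵒᵖ)), s' * r = r' * s := by
    intro r s
    obtain ⟨_, ⟨x, rfl⟩, ⟨y, hy⟩⟩ := hcm (unop r) (unop (s : Mᵐᵒᵖ))
    exact ⟨op y, ⟨op x, trivial⟩, unop_injective (by simpa using hy)⟩
  choose oreNum oreDenom hore using hore
  exact
    { ore_right_cancel := fun r₁ r₂ s h =>
        ⟨1, by simpa using unop_injective (hc.mul_left_cancel (congrArg unop h))⟩
      oreNum, oreDenom, ore_eq := hore }

theorem IsEnvelopingGroup.exists_mul_eq_of_mul_inv_eq (hκ : IsEnvelopingGroup M G κ)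
    (hc : IsCancellative M) (hcm : ∀ a b : M, ∃ c, LDvd a c ∧ LDvd b c) {a b c d : M}
    (h : κ a * (κ b)⁻¹ = κ c * (κ d)⁻¹) : ∃ u v, a * u = c * v ∧ b * u = d * v := by
  let := oreSetTopOp hc hcm
  let L := OreLocalization (⊤ : Submonoid Mᵐᵒᵖ) Mᵐᵒᵖ
  let ι : Mᵐᵒᵖ →* Lˣ :=
    Units.liftRight numeratorHom (fun x => numeratorUnit ⟨x, trivial⟩) fun _ => rfl
  obtain ⟨φ, hφ, -⟩ := hκ _ ((MonoidHom.op ι).comp (MulEquiv.opOp M).toMonoidHom)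
  have hfrac : ∀ x y : M, ((unop (φ (κ x * (κ y)⁻¹)) : Lˣ) : L) =
      op x /ₒ (⟨op y, trivial⟩ : (⊤ : Submonoid Mᵐᵒᵖ)) := by
    intro x y
    rw [map_mul, map_inv, ← MonoidHom.comp_apply, ← MonoidHom.comp_apply, hφ, unop_mul,
      unop_inv, Units.val_mul, Units.inv_mul_eq_iff_eq_mul]
    exact OreLocalization.mul_cancel.symm
  have hL := congrArg (fun g => ((unop (φ g) : Lˣ) : L)) h
  simp only [hfrac] at hL
  rw [oreDiv_eq_iff] at hL
  obtain ⟨u, v, hu, hv⟩ := hL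
  exact ⟨unop v, unop (u : Mᵐᵒᵖ), congrArg unop hu.symm, congrArg unop hv.symm⟩

end EnvelopingGroup

section NormalForm

variable {M : Type} [Monoid M] {G : Type} [Group G] {κ : M →* G} {Δ : M}

theorem exists_normalForm (hM : IsPreGarside M) (hΔ : IsGarsideElt Δ)
    (hκ : IsEnvelopingGroup M G κ) (g : G) : ∃ a b : M, NormalForm κ g a b := by
  obtain ⟨hc, hA, -, hlcmR⟩ := hM
  obtain ⟨a, b, rfl⟩ := hκ.exists_eq_mul_inv hΔ.exists_common_right_mul g
  obtain ⟨d, ⟨a₁, rfl⟩, ⟨b₁, rfl⟩, hd⟩ := exists_isGcdR hA hlcmR a b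
  refine ⟨a₁, b₁, by simp only [map_mul]; group, fun c hca hcb => ?_⟩
  obtain ⟨y, hy⟩ := hd (c * d) (hca.mul_right d) (hcb.mul_right d)
  have hyc : 1 = y * c := hc.mul_right_cancel (by rw [one_mul, mul_assoc, ← hy])
  exact (hA.eq_one_of_mul_eq_one hyc.symm).2

theorem NormalForm.unique (hM : IsPreGarside M) (hΔ : IsGarsideElt Δ)
    (hκ : IsEnvelopingGroup M G κ) {g : G} {a b c d : M} (h₁ : NormalForm κ g a b)
    (h₂ : NormalForm κ g c d) : a = c ∧ b = d := by
  obtain ⟨hc, -, -, hlcmR⟩ := hM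
  obtain ⟨u, v, hac, hbd⟩ := hκ.exists_mul_eq_of_mul_inv_eq hc hΔ.exists_common_right_mul
    (h₁.1.symm.trans h₂.1)
  -- with `m = p * u = q * v` the right lcm of `u` and `v`, the pairs `(a, b)` and `(c, d)`
  -- are `(s * p, t * p)` and `(s * q, t * q)`, and coprimality forces `p = q = 1`
  obtain ⟨m, ⟨p, hp⟩, ⟨q, hq⟩, hm⟩ := hlcmR u v ⟨a * u, ⟨a, rfl⟩, ⟨c, hac⟩⟩
  obtain ⟨s, hs⟩ := hm (a * u) ⟨a, rfl⟩ ⟨c, hac⟩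
  obtain ⟨t, ht⟩ := hm (b * u) ⟨b, rfl⟩ ⟨d, hbd⟩
  have ha : a = s * p := hc.mul_right_cancel (by rw [hs, hp, mul_assoc])
  have hb : b = t * p := hc.mul_right_cancel (by rw [ht, hp, mul_assoc])
  have hc' : c = s * q := hc.mul_right_cancel (by rw [← hac, hs, hq, mul_assoc])
  have hd : d = t * q := hc.mul_right_cancel (by rw [← hbd, ht, hq, mul_assoc])
  obtain rfl : p = 1 := h₁.2 p ⟨s, ha⟩ ⟨t, hb⟩
  obtain rfl : q = 1 := h₂.2 q ⟨s, hc'⟩ ⟨t, hd⟩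
  exact ⟨ha.trans hc'.symm, hb.trans hd.symm⟩

end NormalForm

section PairLeN

variable {M : Type*} [Monoid M] {N : Submonoid M} {a₁ a₂ a₃ b b₁ b₂ b₃ c d h₁ h₂ x : M}

/-- The relation `≤_N` between the normal forms `(a₁, b₁)` and `(a₂, b₂)`. -/
def PairLeN (N : Submonoid M) (a₁ b₁ a₂ b₂ : M) : Prop :=
  ∃ h₁ ∈ N, ∃ h₂ ∈ N, ∃ a : M, a₂ = a₁ * a ∧ h₂ * b₂ = h₁ * b₁ * a ∧
    ∃ d : M, IsGcdL h₂ h₁ d ∧ IsGcdL h₂ (h₁ * b₁) d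

theorem pairLeN_refl (N : Submonoid M) (a b : M) : PairLeN N a b a b :=
  ⟨1, N.one_mem, 1, N.one_mem, 1, (mul_one a).symm, by rw [mul_one],
    1, ⟨ldvd_refl 1, ldvd_refl 1, fun _ hc _ => hc⟩, ⟨ldvd_refl 1, one_ldvd _, fun _ hc _ => hc⟩⟩

theorem ldvd_mul_of_isGcdL (hc : IsCancellative M)
    (hlcm : ∀ a b : M, (∃ c, LDvd a c ∧ LDvd b c) → ∃ m, IsLcmL a b m)
    (hd₁ : LDvd d h₁) (hd₂ : IsGcdL h₂ (h₁ * b) d) (hch : LDvd c (x * h₂))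
    (hcb : LDvd c (x * (h₁ * b))) : LDvd c (x * h₁) :=
  ((hd₂.mul_left hc hlcm x).2.2 c hch hcb).trans (hd₁.mul_left x)

theorem rdvd_of_mul_eq_of_isGcdL (hc : IsCancellative M) (heq : h₂ * b₂ = h₁ * b₁)
    (hd₁ : LDvd d h₁) (hd₂ : IsGcdL h₂ (h₁ * b₁) d) : RDvd b₁ b₂ := by
  obtain ⟨k, rfl⟩ := (hd₂.2.2 h₂ (ldvd_refl h₂) (heq ▸ ldvd_mul_right h₂ b₂)).trans hd₁
  exact ⟨k, hc.mul_left_cancel (by rw [heq, mul_assoc])⟩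

theorem PairLeN.antisymm (hc : IsCancellative M) (hA : IsAtomicMon M)
    (h₁₂ : PairLeN N a₁ b₁ a₂ b₂) (h₂₁ : PairLeN N a₂ b₂ a₁ b₁) : a₁ = a₂ ∧ b₁ = b₂ := by
  obtain ⟨h₁, -, h₂, -, a, ha, hb, d, hd₁, hd₂⟩ := h₁₂
  obtain ⟨h₁', -, h₂', -, a', ha', hb', d', hd₁', hd₂'⟩ := h₂₁
  obtain rfl : a₁ = a₂ := LDvd.antisymm hc hA ⟨a, ha⟩ ⟨a', ha'⟩
  obtain rfl : a = 1 := hc.mul_left_cancel (ha.symm.trans (mul_one a₁).symm)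
  obtain rfl : a' = 1 := hc.mul_left_cancel (ha'.symm.trans (mul_one a₁).symm)
  rw [mul_one] at hb hb'
  exact ⟨rfl, RDvd.antisymm hc hA (rdvd_of_mul_eq_of_isGcdL hc hb hd₁.2.1 hd₂)
    (rdvd_of_mul_eq_of_isGcdL hc hb' hd₁'.2.1 hd₂')⟩

theorem PairLeN.trans {Δ : M} (hM : IsPreGarside M) (hΔ : IsGarsideElt Δ) (hN : IsParabolic N)
    (h₁₂ : PairLeN N a₁ b₁ a₂ b₂) (h₂₃ : PairLeN N a₂ b₂ a₃ b₃) : PairLeN N a₁ b₁ a₃ b₃ := by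
  obtain ⟨hc, hA, hlcmL, hlcmR⟩ := hM
  obtain ⟨h₁, hh₁, h₂, hh₂, a, rfl, hb₂, d, hd₁, hd₂⟩ := h₁₂
  obtain ⟨h₁', hh₁', h₂', hh₂', a', rfl, hb₃, d', hd₁', hd₂'⟩ := h₂₃
  obtain ⟨m, hm⟩ := hlcmR h₁' h₂ (hΔ.exists_common_left_mul h₁' h₂)
  obtain ⟨x, hx⟩ := hm.1
  obtain ⟨y, hy⟩ := hm.2.1
  have hmN : m ∈ N := hN.2.2 _ _ _ hh₁' hh₂ hm
  have hxN : x ∈ N := (hN.1 x h₁' (hx ▸ hmN)).1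
  have hyN : y ∈ N := (hN.1 y h₂ (hy ▸ hmN)).1
  have hb : y * h₁ * b₁ * a = x * (h₁' * b₂) :=
    calc y * h₁ * b₁ * a = y * (h₂ * b₂) := by rw [hb₂]; simp only [mul_assoc]
      _ = x * (h₁' * b₂) := by rw [← mul_assoc, ← hy, hx, mul_assoc]
  obtain ⟨e, he⟩ := exists_isGcdL hA hlcmL (x * h₂') (y * h₁ * b₁)
  have hey₂ : LDvd e (y * h₂) := hy ▸ hx ▸
    ldvd_mul_of_isGcdL hc hlcmL hd₁'.2.1 hd₂' he.1 (hb ▸ he.2.1.trans (ldvd_mul_right _ a))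
  have hey₁ : LDvd e (y * h₁) :=
    ldvd_mul_of_isGcdL hc hlcmL hd₁.2.1 hd₂ hey₂ (by simpa only [mul_assoc] using he.2.1)
  refine ⟨y * h₁, mul_mem hyN hh₁, x * h₂', mul_mem hxN hh₂', a * a', by rw [mul_assoc], ?_,
    e, he.of_mul_right hey₁, he⟩
  calc x * h₂' * b₃ = x * h₁' * b₂ * a' := by rw [mul_assoc x, hb₃]; simp only [mul_assoc]
    _ = y * (h₂ * b₂) * a' := by rw [← hx, hy, mul_assoc y]
    _ = y * h₁ * b₁ * (a * a') := by rw [hb₂]; simp only [mul_assoc]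

theorem PairLeN.inv_mul_mem {G : Type*} [Group G] (κ : M →* G) (h : PairLeN N a₁ b₁ a₂ b₂) :
    (κ a₂ * (κ b₂)⁻¹)⁻¹ * (κ a₁ * (κ b₁)⁻¹) ∈ Subgroup.closure (κ '' (N : Set M)) := by
  obtain ⟨h₁, hh₁, h₂, hh₂, a, rfl, hb, -⟩ := h
  have hb₂ : κ b₂ = (κ h₂)⁻¹ * (κ h₁ * κ b₁ * κ a) :=
    eq_inv_mul_of_mul_eq (by rw [← map_mul, hb, map_mul, map_mul])
  have hcoset : (κ (a₁ * a) * (κ b₂)⁻¹)⁻¹ * (κ a₁ * (κ b₁)⁻¹) = (κ h₂)⁻¹ * κ h₁ := by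
    rw [hb₂, map_mul]
    group
  rw [hcoset]
  exact mul_mem (inv_mem (Subgroup.subset_closure ⟨h₂, hh₂, rfl⟩))
    (Subgroup.subset_closure ⟨h₁, hh₁, rfl⟩)

end PairLeN

theorem leN_iff_pairLeN {M : Type} [Monoid M] {G : Type} [Group G] {κ : M →* G} {Δ : M}
    {N : Submonoid M} (hM : IsPreGarside M) (hΔ : IsGarsideElt Δ) (hκ : IsEnvelopingGroup M G κ)
    {g₁ g₂ : G} {a₁ b₁ a₂ b₂ : M} (hg₁ : NormalForm κ g₁ a₁ b₁) (hg₂ : NormalForm κ g₂ a₂ b₂) :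
    leN κ N g₁ g₂ ↔ PairLeN N a₁ b₁ a₂ b₂ := by
  refine ⟨fun ⟨a₁', b₁', a₂', b₂', hg₁', hg₂', h⟩ => ?_, fun h => ⟨a₁, b₁, a₂, b₂, hg₁, hg₂, h⟩⟩
  obtain ⟨rfl, rfl⟩ := hg₁.unique hM hΔ hκ hg₁'
  obtain ⟨rfl, rfl⟩ := hg₂.unique hM hΔ hκ hg₂'
  exact h

/-- **Theorem 4.4 (1)-(2).** For a Garside monoid `M` with Garside element `Δ` and a
parabolic submonoid `N`, the relation `≤_N` is a partial order on the enveloping group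
`G(M)`, and `g₁ ≤_N g₂` implies `g₁ G(N) = g₂ G(N)`. -/
theorem theorem_4_4_order {M : Type} [Monoid M] (hM : IsPreGarside M) (Δ : M)
    (hΔ : IsGarsideElt Δ) (N : Submonoid M) (hN : IsParabolic N)
    {G : Type} [Group G] (κ : M →* G) (hκ : IsEnvelopingGroup M G κ) :
    Reflexive (leN κ N) ∧ AntiSymmetric (leN κ N) ∧ Transitive (leN κ N) ∧
    ∀ g₁ g₂ : G, leN κ N g₁ g₂ →
      g₂⁻¹ * g₁ ∈ Subgroup.closure (κ '' (N : Set M)) := by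
  have hnf := exists_normalForm hM hΔ hκ
  refine ⟨fun g => ?_, fun g₁ g₂ h₁₂ h₂₁ => ?_, fun g₁ g₂ g₃ h₁₂ h₂₃ => ?_, ?_⟩
  · obtain ⟨a, b, hg⟩ := hnf g
    exact (leN_iff_pairLeN hM hΔ hκ hg hg).2 (pairLeN_refl N a b)
  · obtain ⟨a₁, b₁, hg₁⟩ := hnf g₁
    obtain ⟨a₂, b₂, hg₂⟩ := hnf g₂
    obtain ⟨rfl, rfl⟩ := ((leN_iff_pairLeN hM hΔ hκ hg₁ hg₂).1 h₁₂).antisymm hM.1 hM.2.1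
      ((leN_iff_pairLeN hM hΔ hκ hg₂ hg₁).1 h₂₁)
    rw [hg₁.1, hg₂.1]
  · obtain ⟨a₁, b₁, hg₁⟩ := hnf g₁
    obtain ⟨a₂, b₂, hg₂⟩ := hnf g₂
    obtain ⟨a₃, b₃, hg₃⟩ := hnf g₃
    exact (leN_iff_pairLeN hM hΔ hκ hg₁ hg₃).2 <|
      ((leN_iff_pairLeN hM hΔ hκ hg₁ hg₂).1 h₁₂).trans hM hΔ hN
        ((leN_iff_pairLeN hM hΔ hκ hg₂ hg₃).1 h₂₃)
  · rintro g₁ g₂ ⟨a₁, b₁, a₂, b₂, hg₁, hg₂, h⟩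
    rw [hg₁.1, hg₂.1]
    exact PairLeN.inv_mul_mem κ h

end PG
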